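/- In a countably additive Popper space, every ∼-equivalence class [V] of conditioning events contains a maximal element V*: there exists V* ∈ [V] such that μ(V* | V' ∪ V*) = 1 for all V' ∈ [V]. -/

import Mathlib

/-- A countably additive Popper space over `(W, F)`: `F` is a σ-algebra of subsets of `W`,
`F'` ⊆ `F` does not contain `∅`, is closed under supersets in `F`, satisfies the regularity
condition that `μ(V | U) ≠ 0` with `U ∈ F'` implies `V ∩ U ∈ F'`, and `μ` satisfies CP1–CP3
and is countably additive in its first argument. -/
structure Popper {W : Type*} (F F' : Set (Set W)) (μ : Set W → Set W → ℝ) : Prop where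
  univ_mem : Set.univ ∈ F
  compl_mem : ∀ ⦃U⦄, U ∈ F → Uᶜ ∈ F
  iUnion_mem : ∀ s : ℕ → Set W, (∀ n, s n ∈ F) → (⋃ n, s n) ∈ F
  subset : F' ⊆ F
  empty_not_mem : (∅ : Set W) ∉ F'
  superset_closed : ∀ ⦃U V⦄, U ∈ F' → U ⊆ V → V ∈ F → V ∈ F'
  cond_closed : ∀ ⦃U V⦄, U ∈ F' → V ∈ F → μ V U ≠ 0 → V ∩ U ∈ F'
  nonneg : ∀ V ∈ F, ∀ U ∈ F', 0 ≤ μ V U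
  le_one : ∀ V ∈ F, ∀ U ∈ F', μ V U ≤ 1
  cp1 : ∀ U ∈ F', μ U U = 1
  cp2 : ∀ V₁ ∈ F, ∀ V₂ ∈ F, ∀ U ∈ F', Disjoint V₁ V₂ → μ (V₁ ∪ V₂) U = μ V₁ U + μ V₂ U
  cp3 : ∀ V ∈ F, ∀ X ∈ F', ∀ U ∈ F', V ⊆ X → X ⊆ U → μ V U = μ V X * μ X U
  countably_additive : ∀ V : ℕ → Set W, (∀ n, V n ∈ F) → Pairwise (Function.onFun Disjoint V) →
    ∀ U ∈ F', HasSum (fun n => μ (V n) U) (μ (⋃ n, V n) U)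

/-- The relation `U ≤ V` defined by `μ(U | U ∪ V) > 0`. -/
def leRel {W : Type*} (μ : Set W → Set W → ℝ) (U V : Set W) : Prop :=
  0 < μ U (U ∪ V)

/-- `U ∼ V` iff `U ≤ V` and `V ≤ U`. -/
def simRel {W : Type*} (μ : Set W → Set W → ℝ) (U V : Set W) : Prop :=
  leRel μ U V ∧ leRel μ V U

/-!
Among the events `U ⊇ V` with `μ(V | U) > 0`, take a sequence `Uₙ` along which `μ(V | Uₙ)`
tends to the infimum `β`. Countable additivity makes some `Uₙ` non-null given `V* := ⋃ Uₙ`, so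
`μ(V | V*) = μ(V | Uₙ) μ(Uₙ | V*) > 0`, while `μ(V | V*) ≤ μ(V | Uₙ)` for all `n` forces
`μ(V | V*) = β`. For `V' ∼ V` the event `V' ∪ V*` is again admissible, hence
`β ≤ μ(V | V' ∪ V*) = β · μ(V* | V' ∪ V*)`, and `β > 0` gives `μ(V* | V' ∪ V*) = 1`.
-/

namespace Popper

variable {W : Type*} {F F' : Set (Set W)} {μ : Set W → Set W → ℝ}

abbrev toMeasurableSpace (h : Popper F F' μ) : MeasurableSpace W where
  MeasurableSet' s := s ∈ F
  measurableSet_empty := by simpa using h.compl_mem h.univ_mem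
  measurableSet_compl _ hs := h.compl_mem hs
  measurableSet_iUnion := h.iUnion_mem

variable (h : Popper F F' μ)
include h

theorem union_mem {A B : Set W} (hA : A ∈ F) (hB : B ∈ F) : A ∪ B ∈ F :=
  MeasurableSet.union (m := h.toMeasurableSpace) hA hB

theorem diff_mem {A B : Set W} (hA : A ∈ F) (hB : B ∈ F) : A \ B ∈ F :=
  MeasurableSet.diff (m := h.toMeasurableSpace) hA hB

theorem disjointed_mem {s : ℕ → Set W} (hs : ∀ n, s n ∈ F) (n : ℕ) : disjointed s n ∈ F :=
  @MeasurableSet.disjointed _ h.toMeasurableSpace _ hs n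

theorem mono {A B U : Set W} (hA : A ∈ F) (hB : B ∈ F) (hAB : A ⊆ B) (hU : U ∈ F') :
    μ A U ≤ μ B U := by
  have hBA := h.diff_mem hB hA
  have hsplit : μ B U = μ A U + μ (B \ A) U := by
    rw [← h.cp2 A hA _ hBA U hU disjoint_sdiff_self_right, Set.union_sdiff_cancel hAB]
  linarith [h.nonneg _ hBA U hU]

theorem union_le_add {A B U : Set W} (hA : A ∈ F) (hB : B ∈ F) (hU : U ∈ F') :
    μ (A ∪ B) U ≤ μ A U + μ B U := by
  have hBA := h.diff_mem hB hA
  have hsplit : μ (A ∪ B) U = μ A U + μ (B \ A) U := by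
    rw [← h.cp2 A hA _ hBA U hU disjoint_sdiff_self_right, Set.union_sdiff_self]
  linarith [h.mono hBA hB Set.sdiff_subset hU]

theorem cond_le_of_subset {V U U' : Set W} (hV : V ∈ F) (hU : U ∈ F') (hU' : U' ∈ F')
    (hVU : V ⊆ U) (hUU' : U ⊆ U') : μ V U' ≤ μ V U := by
  rw [h.cp3 V hV U hU U' hU' hVU hUU']
  exact mul_le_of_le_one_right (h.nonneg V hV U hU) (h.le_one U (h.subset hU) U' hU')

theorem cond_union_pos {V A B : Set W} (hV : V ∈ F') (hA : A ∈ F) (hB : B ∈ F)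
    (hVA : V ⊆ A) (hVB : V ⊆ B) (hA_pos : 0 < μ V A) (hB_pos : 0 < μ V B) :
    0 < μ V (A ∪ B) := by
  have hVF := h.subset hV
  have hA' := h.superset_closed hV hVA hA
  have hB' := h.superset_closed hV hVB hB
  have hAB' := h.superset_closed hA' Set.subset_union_left (h.union_mem hA hB)
  refine (h.nonneg V hVF _ hAB').lt_of_ne fun hzero => ?_
  -- If `V` were null given `A ∪ B`, both `A` and `B` would be, which `μ(A ∪ B | A ∪ B) = 1` forbids.
  have hA_null : μ A (A ∪ B) = 0 := by
    rw [h.cp3 V hVF A hA' _ hAB' hVA Set.subset_union_left] at hzero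
    exact (mul_eq_zero.1 hzero.symm).resolve_left hA_pos.ne'
  have hB_null : μ B (A ∪ B) = 0 := by
    rw [h.cp3 V hVF B hB' _ hAB' hVB Set.subset_union_right] at hzero
    exact (mul_eq_zero.1 hzero.symm).resolve_left hB_pos.ne'
  have := h.union_le_add hA hB hAB'
  rw [h.cp1 _ hAB', hA_null, hB_null] at this
  norm_num at this

theorem exists_pos_of_iUnion {s : ℕ → Set W} (hs : ∀ n, s n ∈ F) (hU : (⋃ n, s n) ∈ F') :
    ∃ n, 0 < μ (s n) (⋃ n, s n) := by
  have hsum := h.countably_additive _ (h.disjointed_mem hs) (disjoint_disjointed s) _ hU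
  rw [iUnion_disjointed, h.cp1 _ hU] at hsum
  obtain ⟨n, hn⟩ : ∃ n, μ (disjointed s n) (⋃ n, s n) ≠ 0 := by
    by_contra! hzero
    exact one_ne_zero (hsum.unique (by simp [hzero]))
  refine ⟨n, (lt_of_le_of_ne (h.nonneg _ (h.disjointed_mem hs n) _ hU) hn.symm).trans_le ?_⟩
  exact h.mono (h.disjointed_mem hs n) (hs n) (disjointed_subset s n) hU

theorem cond_iUnion_pos {V : Set W} {s : ℕ → Set W} (hV : V ∈ F') (hs : ∀ n, s n ∈ F)
    (hVs : ∀ n, V ⊆ s n) (hpos : ∀ n, 0 < μ V (s n)) : 0 < μ V (⋃ n, s n) := by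
  have hU : (⋃ n, s n) ∈ F' :=
    h.superset_closed hV ((hVs 0).trans (Set.subset_iUnion s 0)) (h.iUnion_mem s hs)
  obtain ⟨n, hn⟩ := h.exists_pos_of_iUnion hs hU
  rw [h.cp3 V (h.subset hV) (s n) (h.superset_closed hV (hVs n) (hs n)) _ hU (hVs n)
    (Set.subset_iUnion s n)]
  exact mul_pos (hpos n) hn

theorem exists_minimizing_cond {V : Set W} (hV : V ∈ F') :
    ∃ Vs ∈ F, V ⊆ Vs ∧ 0 < μ V Vs ∧
      ∀ U ∈ F, V ⊆ U → 0 < μ V U → μ V Vs ≤ μ V U := by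
  set S : Set ℝ := {x | ∃ U ∈ F, V ⊆ U ∧ 0 < μ V U ∧ μ V U = x}
  have hS : S.Nonempty := ⟨_, V, h.subset hV, subset_rfl, by rw [h.cp1 V hV]; exact one_pos, rfl⟩
  have hS_bdd : BddBelow S := ⟨0, by rintro _ ⟨U, -, -, hpos, rfl⟩; exact hpos.le⟩
  obtain ⟨u, -, hu_lim, hu_mem⟩ := exists_seq_tendsto_sInf hS hS_bdd
  choose U hUF hVU hpos hu using hu_mem
  have hVs : V ⊆ ⋃ n, U n := (hVU 0).trans (Set.subset_iUnion U 0)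
  have hVs' := h.superset_closed hV hVs (h.iUnion_mem U hUF)
  refine ⟨⋃ n, U n, h.iUnion_mem U hUF, hVs, h.cond_iUnion_pos hV hUF hVU hpos,
    fun U' hU' hVU' hpos' => ?_⟩
  have hle_inf : μ V (⋃ n, U n) ≤ sInf S := ge_of_tendsto' hu_lim fun n => hu n ▸
    h.cond_le_of_subset (h.subset hV) (h.superset_closed hV (hVU n) (hUF n)) hVs' (hVU n)
      (Set.subset_iUnion U n)
  exact hle_inf.trans (csInf_le hS_bdd ⟨U', hU', hVU', hpos', rfl⟩)

theorem cond_eq_one_of_le {V X U : Set W} (hV : V ∈ F) (hX : X ∈ F') (hU : U ∈ F')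
    (hVX : V ⊆ X) (hXU : X ⊆ U) (hpos : 0 < μ V X) (hle : μ V X ≤ μ V U) : μ X U = 1 := by
  rw [h.cp3 V hV X hX U hU hVX hXU] at hle
  exact le_antisymm (h.le_one X (h.subset hX) U hU) ((le_mul_iff_one_le_right hpos).1 hle)

end Popper

theorem simRel_of_subset {W : Type*} {μ : Set W → Set W → ℝ} {V U : Set W} (hVU : V ⊆ U)
    (hU : μ U U = 1) (hpos : 0 < μ V U) : simRel μ U V := by
  refine ⟨?_, ?_⟩ <;>
    simp only [leRel, Set.union_eq_self_of_subset_right hVU, Set.union_eq_self_of_subset_left hVU]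
  · exact hU ▸ one_pos
  · exact hpos

/-- In a countably additive Popper space, every `∼`-equivalence class `[V]` of conditioning
events contains a maximal element `V*`: there is `V* ∈ [V]` with `μ(V* | V' ∪ V*) = 1`
for all `V' ∈ [V]`. -/
theorem stmt5 {W : Type*} {F F' : Set (Set W)} {μ : Set W → Set W → ℝ}
    (h : Popper F F' μ) (V : Set W) (hV : V ∈ F') :
    ∃ Vs ∈ F', simRel μ Vs V ∧
      ∀ V' ∈ F', simRel μ V' V → μ Vs (V' ∪ Vs) = 1 := by
  obtain ⟨Vs, hVsF, hVVs, hpos, hmin⟩ := h.exists_minimizing_cond hV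
  have hVs := h.superset_closed hV hVVs hVsF
  refine ⟨Vs, hVs, simRel_of_subset hVVs (h.cp1 Vs hVs) hpos, fun V' hV' hV'V => ?_⟩
  have hUF := h.union_mem (h.subset hV') hVsF
  have hVU : V ⊆ V' ∪ Vs := hVVs.trans Set.subset_union_right
  have hU_pos : 0 < μ V (V' ∪ Vs) := by
    have := h.cond_union_pos hV (h.union_mem (h.subset hV) (h.subset hV')) hVsF
      Set.subset_union_left hVVs hV'V.2 hpos
    rwa [Set.union_assoc, Set.union_eq_self_of_subset_left hVU] at this
  exact h.cond_eq_one_of_le (h.subset hV) hVs (h.superset_closed hVs Set.subset_union_right hUF)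
    hVVs Set.subset_union_right hpos (hmin _ hUF hVU hU_pos)
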